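/- For each even h₀₂ < 0 scaling, consider the quartic Hamiltonian H₂(x,y) = (1/2)y² + 2Ax²y + (1/2)y³ + Bx⁴ + Ax²y² + (1/8)y⁴ with B > 2A². Then H₂ restricted to the curve y = φ(x) (where ∂H₂/∂y(x,φ(x)) = 0) satisfies H₂(x,φ(x)) = (B - 2A²)x⁴ + O(x⁵) with B - 2A² > 0; hence the origin is a nilpotent center of order 1 of the Hamiltonian system ẋ = (H₂)_y, ẏ = -(H₂)_x. -/

import Mathlib

/-!
Write `ψ = φ + 2Ax²`. Completing the square gives the exact identity
`H₂(x, y) - (B - 2A²)x⁴ = ½(y + 2Ax²)² + ½y³ + Ax²y² + ⅛y⁴`, and the critical-point equation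
`(H₂)_y(x, φ) = ψ + (3/2)φ² + 2Ax²φ + ½φ³ = 0` together with `φ = O(x²)` forces `ψ = O(x⁴)`.
Every term on the right is then `O(x⁶)`, in particular `O(x⁵)`.
-/

open Asymptotics Filter Topology

section Monomials

variable {𝕜 : Type*} [NormedField 𝕜]

lemma isBigO_pow_pow_nhds_zero_of_le {m n : ℕ} (h : n ≤ m) :
    (fun x : 𝕜 => x ^ m) =O[𝓝 0] fun x => x ^ n := by
  rcases h.eq_or_lt with rfl | hlt
  · exact isBigO_refl _ _
  · exact (isLittleO_pow_pow hlt).isBigO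

lemma Asymptotics.IsBigO.monomial_nhds_zero {f : 𝕜 → 𝕜} {a j k n : ℕ}
    (hf : f =O[𝓝 0] fun x => x ^ a) (hn : n ≤ j + a * k) :
    (fun x => x ^ j * f x ^ k) =O[𝓝 0] fun x => x ^ n := by
  have h := (isBigO_refl (fun x : 𝕜 => x ^ j) (𝓝 0)).mul (hf.pow k)
  refine (h.congr_right fun x => ?_).trans (isBigO_pow_pow_nhds_zero_of_le hn)
  rw [← pow_mul, ← pow_add]

lemma Asymptotics.IsBigO.pow_nhds_zero {f : 𝕜 → 𝕜} {a k n : ℕ}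
    (hf : f =O[𝓝 0] fun x => x ^ a) (hn : n ≤ a * k) :
    (fun x => f x ^ k) =O[𝓝 0] fun x => x ^ n := by
  simpa using hf.monomial_nhds_zero (j := 0) (by simpa using hn)

end Monomials

section QuarticHamiltonian

noncomputable def quarticHamiltonian (A B x y : ℝ) : ℝ :=
  (1 / 2) * y ^ 2 + 2 * A * x ^ 2 * y + (1 / 2) * y ^ 3 + B * x ^ 4 + A * x ^ 2 * y ^ 2 +
    (1 / 8) * y ^ 4

variable (A B : ℝ)

lemma hasDerivAt_quarticHamiltonian (x y : ℝ) :
    HasDerivAt (quarticHamiltonian A B x)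
      (y + 2 * A * x ^ 2 + (3 / 2) * y ^ 2 + 2 * A * x ^ 2 * y + (1 / 2) * y ^ 3) y := by
  have h := (((((((hasDerivAt_pow 2 y).const_mul (1 / 2 : ℝ)).add
    ((hasDerivAt_id y).const_mul (2 * A * x ^ 2))).add
    ((hasDerivAt_pow 3 y).const_mul (1 / 2 : ℝ))).add_const (B * x ^ 4)).add
    ((hasDerivAt_pow 2 y).const_mul (A * x ^ 2))).add
    ((hasDerivAt_pow 4 y).const_mul (1 / 8 : ℝ)))
  exact h.congr_deriv (by norm_num; ring)

lemma quarticHamiltonian_sub_eq (x y : ℝ) :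
    quarticHamiltonian A B x y - (B - 2 * A ^ 2) * x ^ 4 =
      (1 / 2) * (y + 2 * A * x ^ 2) ^ 2 + (1 / 2) * y ^ 3 + A * x ^ 2 * y ^ 2 +
        (1 / 8) * y ^ 4 := by
  unfold quarticHamiltonian
  ring

variable {A B}

lemma isBigO_add_of_deriv_quarticHamiltonian_eq_zero {φ : ℝ → ℝ}
    (hφ2 : φ =O[𝓝 0] fun x => x ^ 2)
    (hφ : ∀ᶠ x in 𝓝 0, deriv (quarticHamiltonian A B x) (φ x) = 0) :
    (fun x => φ x + 2 * A * x ^ 2) =O[𝓝 0] fun x => x ^ 4 := by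
  have hcrit : ∀ᶠ x in 𝓝 0, φ x + 2 * A * x ^ 2 =
      -((3 / 2) * φ x ^ 2 + 2 * A * (x ^ 2 * φ x ^ 1) + (1 / 2) * φ x ^ 3) := by
    filter_upwards [hφ] with x hx
    rw [(hasDerivAt_quarticHamiltonian A B x (φ x)).deriv] at hx
    linear_combination hx
  refine EventuallyEq.trans_isBigO hcrit (IsBigO.neg_left ?_)
  refine IsBigO.add (IsBigO.add ?_ ?_) ?_
  · exact (hφ2.pow_nhds_zero le_rfl).const_mul_left _
  · exact (hφ2.monomial_nhds_zero le_rfl).const_mul_left _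
  · exact (hφ2.pow_nhds_zero (by norm_num)).const_mul_left _

end QuarticHamiltonian

theorem stmt_10_general (A B : ℝ) (hB : B > 2 * A ^ 2)
    (φ : ℝ → ℝ)
    (hφ2 : φ =O[nhds 0] fun x : ℝ => x ^ 2)
    (hφ : ∀ᶠ x in nhds (0:ℝ),
      deriv (fun y => (1 / 2) * y ^ 2 + 2 * A * x ^ 2 * y + (1 / 2) * y ^ 3 +
        B * x ^ 4 + A * x ^ 2 * y ^ 2 + (1 / 8) * y ^ 4) (φ x) = 0) :
    ((fun x : ℝ =>
        ((1 / 2) * (φ x) ^ 2 + 2 * A * x ^ 2 * (φ x) + (1 / 2) * (φ x) ^ 3 +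
          B * x ^ 4 + A * x ^ 2 * (φ x) ^ 2 + (1 / 8) * (φ x) ^ 4)
          - (B - 2 * A ^ 2) * x ^ 4) =O[nhds 0] fun x : ℝ => x ^ 5) ∧
      0 < B - 2 * A ^ 2 := by
  refine ⟨?_, sub_pos.mpr hB⟩
  have hψ := isBigO_add_of_deriv_quarticHamiltonian_eq_zero hφ2 hφ
  have hsum : (fun x => (1 / 2) * (φ x + 2 * A * x ^ 2) ^ 2 + (1 / 2) * φ x ^ 3 +
      A * (x ^ 2 * φ x ^ 2) + (1 / 8) * φ x ^ 4) =O[𝓝 0] fun x => x ^ 5 :=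
    ((((hψ.pow_nhds_zero (by norm_num)).const_mul_left _).add
      ((hφ2.pow_nhds_zero (by norm_num)).const_mul_left _)).add
      ((hφ2.monomial_nhds_zero (by norm_num)).const_mul_left _)).add
      ((hφ2.pow_nhds_zero (by norm_num)).const_mul_left _)
  refine hsum.congr_left fun x => ?_
  rw [← mul_assoc]
  exact (quarticHamiltonian_sub_eq A B x (φ x)).symm

/-- For `H₂(x,y) = (1/2)y² + 2Ax²y + (1/2)y³ + Bx⁴ + Ax²y² +
(1/8)y⁴` with `B > 2A²`, and `φ(x) = O(x²)` the analytic solution of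
`(H₂)_y(x,φ(x)) = 0`, one has `H₂(x,φ(x)) = (B - 2A²)x⁴ + O(x⁵)` with
`B - 2A² > 0`; hence the origin is a nilpotent center of order 1. -/
theorem stmt_10 (A B : ℝ) (hB : B > 2 * A ^ 2)
    (φ : ℝ → ℝ) (hφa : AnalyticAt ℝ φ 0)
    (hφ2 : φ =O[nhds 0] fun x : ℝ => x ^ 2)
    (hφ : ∀ᶠ x in nhds (0:ℝ),
      deriv (fun y => (1 / 2) * y ^ 2 + 2 * A * x ^ 2 * y + (1 / 2) * y ^ 3 +
        B * x ^ 4 + A * x ^ 2 * y ^ 2 + (1 / 8) * y ^ 4) (φ x) = 0) :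
    ((fun x : ℝ =>
        ((1 / 2) * (φ x) ^ 2 + 2 * A * x ^ 2 * (φ x) + (1 / 2) * (φ x) ^ 3 +
          B * x ^ 4 + A * x ^ 2 * (φ x) ^ 2 + (1 / 8) * (φ x) ^ 4)
          - (B - 2 * A ^ 2) * x ^ 4) =O[nhds 0] fun x : ℝ => x ^ 5) ∧
      0 < B - 2 * A ^ 2 :=
  stmt_10_general A B hB φ hφ2 hφ
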